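/- For every integer n ≥ 2, the upper broadcast irredundance number of the path P_n equals n − 1, i.e. IR_b(P_n) = n − 1. -/

import Mathlib

open SimpleGraph

namespace Broadcast

variable {V : Type*} [Fintype V]

/-- The eccentricity of a vertex: the maximum distance from `v` to any vertex. -/
noncomputable def ecc (G : SimpleGraph V) (v : V) : ℕ :=
  Finset.univ.sup fun u => G.dist v u

/-- A broadcast on `G`: `f v ≤ e_G(v)` for every vertex `v`. -/
def IsBroadcast (G : SimpleGraph V) (f : V → ℕ) : Prop :=
  ∀ v, f v ≤ ecc G v

/-- The cost of a broadcast. -/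
def cost (f : V → ℕ) : ℕ := ∑ v, f v

/-- `hears G f u` is H_f(u): the set of f-broadcast vertices `v` with `d(u,v) ≤ f v`. -/
def hears (G : SimpleGraph V) (f : V → ℕ) (u : V) : Set V :=
  {v | 1 ≤ f v ∧ G.dist u v ≤ f v}

/-- A dominating broadcast: every vertex hears some broadcast vertex. -/
def IsDominating (G : SimpleGraph V) (f : V → ℕ) : Prop :=
  IsBroadcast G f ∧ ∀ u, (hears G f u).Nonempty

/-- A minimal dominating broadcast. -/
def IsMinimalDominating (G : SimpleGraph V) (f : V → ℕ) : Prop :=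
  IsDominating G f ∧ ∀ g, IsDominating G g → (∀ v, g v ≤ f v) → g = f

/-- The broadcast domination number γ_b: minimum cost of a dominating broadcast. -/
noncomputable def broadcastDomination (G : SimpleGraph V) : ℕ :=
  sInf {c | ∃ f, IsDominating G f ∧ cost f = c}

/-- The upper broadcast domination number Γ_b: maximum cost of a minimal dominating broadcast. -/
noncomputable def upperBroadcastDomination (G : SimpleGraph V) : ℕ :=
  sSup {c | ∃ f, IsMinimalDominating G f ∧ cost f = c}

/-- The private f-neighborhood PN_f(v): vertices hearing only `v`. -/
def privateNbhd (G : SimpleGraph V) (f : V → ℕ) (v : V) : Set V :=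
  {u | hears G f u = {v}}

open Classical in
/-- The private f-border PB_f(v). -/
noncomputable def privateBorder (G : SimpleGraph V) (f : V → ℕ) (v : V) : Set V :=
  if f v = 1 ∧ privateNbhd G f v = {v} then {v}
  else {u | u ∈ privateNbhd G f v ∧ G.dist u v = f v}

/-- An irredundant broadcast: every broadcast vertex has a nonempty private border. -/
def IsIrredundant (G : SimpleGraph V) (f : V → ℕ) : Prop :=
  IsBroadcast G f ∧ ∀ v, 1 ≤ f v → (privateBorder G f v).Nonempty

/-- A maximal irredundant broadcast. -/
def IsMaximalIrredundant (G : SimpleGraph V) (f : V → ℕ) : Prop :=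
  IsIrredundant G f ∧ ∀ g, IsIrredundant G g → (∀ v, f v ≤ g v) → g = f

/-- The upper broadcast irredundance number IR_b: maximum cost of an irredundant broadcast. -/
noncomputable def upperBroadcastIrredundance (G : SimpleGraph V) : ℕ :=
  sSup {c | ∃ f, IsIrredundant G f ∧ cost f = c}

/-- The broadcast irredundance number ir_b: minimum cost of a maximal irredundant broadcast. -/
noncomputable def broadcastIrredundance (G : SimpleGraph V) : ℕ :=
  sInf {c | ∃ f, IsMaximalIrredundant G f ∧ cost f = c}

/-- An independent broadcast: every broadcast vertex hears only itself, i.e. |H_f(v)| = 1. -/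
def IsIndependent (G : SimpleGraph V) (f : V → ℕ) : Prop :=
  IsBroadcast G f ∧ ∀ v, 1 ≤ f v → hears G f v = {v}

/-- A maximal independent broadcast. -/
def IsMaximalIndependent (G : SimpleGraph V) (f : V → ℕ) : Prop :=
  IsIndependent G f ∧ ∀ g, IsIndependent G g → (∀ v, f v ≤ g v) → g = f

/-- The broadcast independence number β_b: maximum cost of an independent broadcast. -/
noncomputable def broadcastIndependence (G : SimpleGraph V) : ℕ :=
  sSup {c | ∃ f, IsIndependent G f ∧ cost f = c}

/-- The lower broadcast independence number i_b: minimum cost of a maximal independent broadcast. -/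
noncomputable def lowerBroadcastIndependence (G : SimpleGraph V) : ℕ :=
  sInf {c | ∃ f, IsMaximalIndependent G f ∧ cost f = c}

/-- A packing broadcast: every vertex hears at most one broadcast vertex. -/
def IsPacking (G : SimpleGraph V) (f : V → ℕ) : Prop :=
  IsBroadcast G f ∧ ∀ u, (hears G f u).Subsingleton

/-- A maximal packing broadcast. -/
def IsMaximalPacking (G : SimpleGraph V) (f : V → ℕ) : Prop :=
  IsPacking G f ∧ ∀ g, IsPacking G g → (∀ v, f v ≤ g v) → g = f

/-- The broadcast packing number P_b: maximum cost of a packing broadcast. -/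
noncomputable def broadcastPacking (G : SimpleGraph V) : ℕ :=
  sSup {c | ∃ f, IsPacking G f ∧ cost f = c}

/-- The lower broadcast packing number p_b: minimum cost of a maximal packing broadcast. -/
noncomputable def lowerBroadcastPacking (G : SimpleGraph V) : ℕ :=
  sInf {c | ∃ f, IsMaximalPacking G f ∧ cost f = c}

end Broadcast

/-!
Let `f` be an irredundant broadcast on `P_n`. Every broadcasting vertex `v` has a private
neighbour `u_v` with `d(u_v, v) = f v` (or `u_v = v` and `f v = 1`). At least `f v` edges of the
path have their midpoint `m` in the "ellipse" `d(m, v) + d(m, u_v) ≤ f v`. Since `u_v` hears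
no other broadcasting vertex `w`, we have `f w < d(u_v, w)`, and the triangle inequality through
a common midpoint shows that the ellipses of distinct broadcasting vertices share no edge. Hence
`cost f ≤ n - 1`, and broadcasting `n - 1` from an end vertex attains the bound.
-/

namespace Broadcast

section General

variable {V : Type*} {G : SimpleGraph V} {f : V → ℕ} {u v w : V}

lemma dist_le_ecc [Fintype V] (G : SimpleGraph V) (v u : V) : G.dist v u ≤ ecc G v :=
  Finset.le_sup (Finset.mem_univ u)

lemma exists_ne_of_pos_ecc [Fintype V] (h : 0 < ecc G v) : ∃ u, u ≠ v := by
  obtain ⟨u, -, hu⟩ := Finset.lt_sup_iff.mp h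
  exact ⟨u, fun huv => by simp [huv] at hu⟩

lemma lt_dist_of_mem_privateNbhd (hu : u ∈ privateNbhd G f v) (hwv : w ≠ v) (hw : 1 ≤ f w) :
    f w < G.dist u w := by
  by_contra! h
  have hw_heard : w ∈ hears G f u := ⟨hw, h⟩
  rw [show hears G f u = {v} from hu] at hw_heard
  exact hwv hw_heard

lemma privateBorder_nonempty_of_mem_privateNbhd (hu : u ∈ privateNbhd G f v)
    (huv : G.dist u v = f v) : (privateBorder G f v).Nonempty := by
  unfold privateBorder
  split_ifs
  · exact Set.singleton_nonempty v
  · exact ⟨u, hu, huv⟩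

lemma exists_mem_privateNbhd_of_privateBorder_nonempty (h : (privateBorder G f v).Nonempty) :
    ∃ u ∈ privateNbhd G f v, G.dist u v = f v ∨ (u = v ∧ f v = 1) := by
  obtain ⟨u, hu⟩ := h
  unfold privateBorder at hu
  split_ifs at hu with hself
  · obtain ⟨hfv, hpn⟩ := hself
    exact ⟨v, hpn ▸ rfl, Or.inr ⟨rfl, hfv⟩⟩
  · exact ⟨u, hu.1, Or.inl hu.2⟩

end General

section Path

variable {n : ℕ}

lemma pathGraph_dist (u v : Fin n) : (pathGraph n).dist u v = Nat.dist u v := by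
  refine le_antisymm ?_ ?_
  · wlog huv : u ≤ v generalizing u v
    · rw [SimpleGraph.dist_comm, Nat.dist_comm]
      exact this v u (le_of_not_ge huv)
    obtain ⟨d, hd⟩ := Nat.exists_eq_add_of_le (Fin.le_iff_val_le_val.mp huv)
    induction d generalizing v with
    | zero => simp [Fin.ext (hd.trans (add_zero _)).symm]
    | succ d ih =>
      set w : Fin n := ⟨u + d, by omega⟩
      have hwv : (pathGraph n).Adj w v := pathGraph_adj.mpr (Or.inl (by simp [w]; omega))
      calc (pathGraph n).dist u v
          ≤ (pathGraph n).dist u w + (pathGraph n).dist w v :=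
            (hwv.reachable).dist_triangle_right u
        _ ≤ Nat.dist u w + 1 := by
            gcongr
            · exact ih w (Fin.le_iff_val_le_val.mpr (by simp [w])) rfl
            · exact (dist_eq_one_iff_adj.mpr hwv).le
        _ = Nat.dist u v := by simp only [w, Nat.dist]; omega
  · obtain ⟨p, hp⟩ := (pathGraph_preconnected n u v).exists_walk_length_eq_dist
    rw [← hp]
    clear hp
    induction p with
    | nil => simp
    | cons hadj p ih =>
      rw [pathGraph_adj] at hadj
      simp only [Walk.length_cons, Nat.dist] at ih ⊢
      omega

/-- Edge `k` of the path joins the vertices `k` and `k + 1`; doubling coordinates puts its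
midpoint at `2 * k + 1`. -/
def edgesInEllipse (n a b r : ℕ) : Finset ℕ :=
  {k ∈ Finset.range (n - 1) | Nat.dist (2 * k + 1) (2 * a) + Nat.dist (2 * k + 1) (2 * b) ≤ 2 * r}

lemma mem_edgesInEllipse {a b r k : ℕ} :
    k ∈ edgesInEllipse n a b r ↔
      k < n - 1 ∧ Nat.dist (2 * k + 1) (2 * a) + Nat.dist (2 * k + 1) (2 * b) ≤ 2 * r := by
  simp [edgesInEllipse]

lemma disjoint_edgesInEllipse {a b r a' b' r' : ℕ} (h : r' < Nat.dist b a')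
    (h' : r < Nat.dist b' a) :
    Disjoint (edgesInEllipse n a b r) (edgesInEllipse n a' b' r') := by
  refine Finset.disjoint_left.mpr fun k hk hk' => ?_
  rw [mem_edgesInEllipse] at hk hk'
  set x := 2 * k + 1
  have htri := Nat.dist.triangle_inequality (2 * b) x (2 * a')
  have htri' := Nat.dist.triangle_inequality (2 * b') x (2 * a)
  rw [Nat.dist_mul_left, Nat.dist_comm (2 * b) x] at htri
  rw [Nat.dist_mul_left, Nat.dist_comm (2 * b') x] at htri'
  omega

lemma le_card_edgesInEllipse {a b r : ℕ} (hn : 2 ≤ n) (ha : a < n) (hb : b < n)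
    (h : Nat.dist a b = r ∨ (a = b ∧ r = 1)) : r ≤ (edgesInEllipse n a b r).card := by
  rcases h with hab | ⟨rfl, rfl⟩
  · have hsub : Finset.Ico (min a b) (max a b) ⊆ edgesInEllipse n a b r := by
      intro k hk
      simp only [Finset.mem_Ico] at hk
      simp only [mem_edgesInEllipse, Nat.dist] at hab ⊢
      omega
    simpa [Nat.card_Ico, ← Nat.dist_eq_max_sub_min, hab] using Finset.card_le_card hsub
  · refine Finset.card_pos.mpr ⟨if a + 1 < n then a else a - 1, ?_⟩
    simp only [mem_edgesInEllipse, Nat.dist]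
    split_ifs <;> omega

lemma cost_le_of_isIrredundant_pathGraph {f : Fin n → ℕ} (hf : IsIrredundant (pathGraph n) f) :
    cost f ≤ n - 1 := by
  classical
  obtain ⟨hbroadcast, hborder⟩ := hf
  choose! u hu hu_dist using fun v (hv : 1 ≤ f v) =>
    exists_mem_privateNbhd_of_privateBorder_nonempty (hborder v hv)
  set S := Finset.univ.filter fun v => f v ≠ 0
  set E := fun v : Fin n => edgesInEllipse n v (u v) (f v)
  have hS : ∀ v ∈ S, 1 ≤ f v := fun v hv => Nat.one_le_iff_ne_zero.mpr (Finset.mem_filter.mp hv).2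
  have hcard : ∀ v ∈ S, f v ≤ (E v).card := by
    intro v hv
    obtain ⟨w, hwv⟩ := exists_ne_of_pos_ecc ((hS v hv).trans (hbroadcast v))
    have hn : 2 ≤ n := by have := Fin.val_ne_of_ne hwv; omega
    refine le_card_edgesInEllipse hn v.isLt (u v).isLt ?_
    rcases hu_dist v (hS v hv) with h | ⟨h, h'⟩
    · exact Or.inl (by rw [Nat.dist_comm, ← pathGraph_dist, h])
    · exact Or.inr ⟨congrArg Fin.val h.symm, h'⟩
  have hdisj : (S : Set (Fin n)).PairwiseDisjoint E := by
    intro v hv w hw hvw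
    apply disjoint_edgesInEllipse <;> rw [← pathGraph_dist]
    · exact lt_dist_of_mem_privateNbhd (hu v (hS v hv)) (Ne.symm hvw) (hS w hw)
    · exact lt_dist_of_mem_privateNbhd (hu w (hS w hw)) hvw (hS v hv)
  calc cost f = ∑ v ∈ S, f v := (Finset.sum_filter_ne_zero _).symm
    _ ≤ ∑ v ∈ S, (E v).card := Finset.sum_le_sum hcard
    _ = (S.biUnion E).card := (Finset.card_biUnion hdisj).symm
    _ ≤ (Finset.range (n - 1)).card :=
      Finset.card_le_card (Finset.biUnion_subset.mpr fun _ _ => Finset.filter_subset _ _)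
    _ = n - 1 := Finset.card_range _

lemma exists_isIrredundant_pathGraph_cost_eq (n : ℕ) :
    ∃ f : Fin n → ℕ, IsIrredundant (pathGraph n) f ∧ cost f = n - 1 := by
  set f : Fin n → ℕ := fun v => if (v : ℕ) = 0 then n - 1 else 0
  have hears_f : ∀ x v : Fin n, 1 ≤ f v → hears (pathGraph n) f x = {v} := by
    intro x v hv
    ext w
    simp only [hears, f, pathGraph_dist, Nat.dist, Set.mem_ofPred_eq, Set.mem_singleton_iff,
      Fin.ext_iff] at hv ⊢
    split_ifs at hv ⊢ <;> omega
  refine ⟨f, ⟨fun v => ?_, fun v hv => ?_⟩, ?_⟩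
  · by_cases hv : (v : ℕ) = 0
    · calc f v = (pathGraph n).dist v ⟨n - 1, by omega⟩ := by
            simp [f, hv, pathGraph_dist, Nat.dist]
        _ ≤ ecc (pathGraph n) v := dist_le_ecc _ _ _
    · simp [f, hv]
  · have hv0 : (v : ℕ) = 0 ∧ 1 < n := by
      simp only [f] at hv
      split_ifs at hv <;> omega
    refine privateBorder_nonempty_of_mem_privateNbhd (u := ⟨n - 1, by omega⟩) (hears_f _ v hv) ?_
    simp [f, hv0.1, pathGraph_dist, Nat.dist]
  · cases n with
    | zero => simp [cost]
    | succ m => simp [cost, f, Fin.val_eq_zero_iff]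

end Path

end Broadcast

open Broadcast in
theorem upperBroadcastIrredundance_pathGraph_general (n : ℕ) :
    upperBroadcastIrredundance (SimpleGraph.pathGraph n) = n - 1 := by
  refine IsGreatest.csSup_eq ⟨exists_isIrredundant_pathGraph_cost_eq n, ?_⟩
  rintro c ⟨f, hf, rfl⟩
  exact cost_le_of_isIrredundant_pathGraph hf

open Broadcast in
/-- For every integer n ≥ 2, IR_b(P_n) = n − 1. -/
theorem upperBroadcastIrredundance_pathGraph (n : ℕ) (hn : 2 ≤ n) :
    upperBroadcastIrredundance (SimpleGraph.pathGraph n) = n - 1 :=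
  upperBroadcastIrredundance_pathGraph_general n
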